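/- Define L ⊆ E^14 (coordinates (x₀; x₁,...,x₁₃) with x₁,...,x₁₃ indexed by points of P²𝔽₃, and Hermitian form −x₀ȳ₀ + Σᵢ₌₁¹³ xᵢȳᵢ) as the set of vectors with x₀ ≡ x₁ + ... + x₁₃ mod θ and (x₁,...,x₁₃) mod θ ∈ C^⊥, where C is the line difference code. Then L is spanned as an E-module by the 13 point roots (0; θ,0,...,0) (with θ in any of the last 13 positions) and the 13 line roots (1; 1,1,1,1,0,...,0) (with the 1's along a line of P²𝔽₃). -/

import Mathlib

noncomputable section
open scoped Classical

def ω : ℂ := -1/2 + (Real.sqrt 3 / 2) * Complex.I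
def θ : ℂ := ω - (starRingEnd ℂ) ω
def Eis : Subring ℂ := Subring.closure {ω}

/-- The projective plane `P²𝔽₃`. -/
abbrev P2F3 := Projectivization (ZMod 3) (Fin 3 → ZMod 3)

instance : Finite P2F3 := Quotient.finite _
noncomputable instance : Fintype P2F3 := Fintype.ofFinite P2F3

/-- Incidence of the line `ℓ` with the point `p`. -/
def incid (ℓ p : P2F3) : Prop := ∑ i, ℓ.rep i * p.rep i = 0

/-- The characteristic function of the line `ℓ`. -/
def chi (ℓ : P2F3) : P2F3 → ZMod 3 := fun p => if incid ℓ p then 1 else 0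

/-- The standard bilinear form on `𝔽₃^13`. -/
def dotP (x y : P2F3 → ZMod 3) : ZMod 3 := ∑ p, x p * y p

/-- The line difference code `C`. -/
def Cdiff : Submodule (ZMod 3) (P2F3 → ZMod 3) :=
  Submodule.span (ZMod 3) {v | ∃ ℓ m : P2F3, v = chi ℓ - chi m}

/-- The line code `C^⊥`. -/
def CdiffPerp : Set (P2F3 → ZMod 3) := {y | ∀ x ∈ Cdiff, dotP x y = 0}

/-- The lattice `L ⊆ Eis^14`: coordinates `(x₀; x_p, p ∈ P²𝔽₃)`, with
`x₀ ≡ ∑ x_p mod θ` and `(x_p) mod θ ∈ C^⊥`. -/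
def L16 : Set (Option P2F3 → ℂ) :=
  {x | (∀ i, x i ∈ Eis) ∧
    (∃ e ∈ Eis, x none - ∑ p : P2F3, x (some p) = θ * e) ∧
    ∃ c ∈ CdiffPerp, ∀ p : P2F3, ∃ e ∈ Eis, x (some p) - ((c p).val : ℂ) = θ * e}

/-- The point root associated to a point `q`. -/
def pointRoot (q : P2F3) : Option P2F3 → ℂ :=
  fun i => if i = some q then θ else 0

/-- The line root associated to a line `ℓ`. -/
def lineRoot (ℓ : P2F3) : Option P2F3 → ℂ := fun i =>
  match i with
  | none => 1
  | some p => if incid ℓ p then 1 else 0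

/-!
Reduction modulo `θ` identifies `Eis / θ Eis` with `𝔽₃`, because `θ² = -3`. Write `A` for the
(symmetric) incidence matrix of `P²𝔽₃` over `𝔽₃`. Two distinct lines meet in one point and a line
has `4 ≡ 1` points, so `A² = J`, the all-ones matrix; in particular `A 1 = 1` and every line lies in
`C^⊥`. Conversely `c ∈ C^⊥` means `A c = s • 1` for some `s`, so `A (c - s • 1) = 0`, and an
explicit certificate `A H + N A = 1` shows `ker A ⊆ range A`; hence `c = A t` is a combination of
lines.

For `x ∈ L` with `x mod θ = c = ∑ t_ℓ χ_ℓ`, lift `t` to line-root coefficients; they match `x₀`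
modulo `θ` because `∑_p c_p = ∑_ℓ t_ℓ`, and adding a multiple of `θ` to one coefficient makes the
`0`-th coordinate exact. What remains is `≡ 0 mod θ` in each point coordinate, i.e. a combination
of point roots.
-/

open Matrix

lemma theta_eq_sqrt_three_mul_I : θ = Real.sqrt 3 * Complex.I := by
  have him : ω.im = Real.sqrt 3 / 2 := by simp [ω]
  rw [θ, Complex.sub_conj, him]
  push_cast
  ring

lemma theta_eq : θ = 2 * ω + 1 := by
  rw [theta_eq_sqrt_three_mul_I, ω]
  ring

lemma theta_mul_self : θ * θ = -3 := by
  have h3 : (Real.sqrt 3 : ℂ) * Real.sqrt 3 = 3 := by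
    exact_mod_cast Real.mul_self_sqrt (by norm_num : (0:ℝ) ≤ 3)
  rw [theta_eq_sqrt_three_mul_I]
  linear_combination (Complex.I * Complex.I) * h3 + 3 * Complex.I_mul_I

lemma omega_mem_Eis : ω ∈ Eis := Subring.subset_closure rfl

lemma theta_mem_Eis : θ ∈ Eis := by
  rw [theta_eq]
  exact add_mem (mul_mem (ofNat_mem Eis 2) omega_mem_Eis) (one_mem Eis)

def thetaEis : AddSubgroup ℂ := Eis.toAddSubgroup.map (AddMonoidHom.mulLeft θ)

lemma mem_thetaEis {z : ℂ} : z ∈ thetaEis ↔ ∃ e ∈ Eis, z = θ * e := by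
  simp [thetaEis, eq_comm]

lemma natCast_sub_natCast_mem_thetaEis {m n : ℕ} (h : (m : ZMod 3) = n) :
    (m : ℂ) - n ∈ thetaEis := by
  obtain ⟨k, hk⟩ := (ZMod.intCast_eq_intCast_iff_dvd_sub n m 3).1 (by exact_mod_cast h.symm)
  refine mem_thetaEis.2 ⟨-θ * k, mul_mem (neg_mem theta_mem_Eis) (intCast_mem Eis k), ?_⟩
  have hk' : (m : ℂ) - n = 3 * k := by exact_mod_cast hk
  linear_combination hk' + (k : ℂ) * theta_mul_self

def pointVec : Fin 13 → Fin 3 → ZMod 3 := ![![0,0,1], ![0,1,0], ![0,1,1], ![0,1,2], ![1,0,0],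
  ![1,0,1], ![1,0,2], ![1,1,0], ![1,1,1], ![1,1,2], ![1,2,0], ![1,2,1], ![1,2,2]]

lemma pointVec_ne_zero : ∀ i, pointVec i ≠ 0 := by decide

lemma pointVec_eq_of_smul_eq :
    ∀ i j : Fin 13, (∃ c : ZMod 3, c ≠ 0 ∧ c • pointVec j = pointVec i) → i = j := by
  decide

def incMatFin : Matrix (Fin 13) (Fin 13) (ZMod 3) :=
  Matrix.of fun i j => if ∑ k, pointVec i k * pointVec j k = 0 then 1 else 0

set_option maxRecDepth 10000 in
lemma incMatFin_mul_self : incMatFin * incMatFin = Matrix.of fun _ _ => 1 := by decide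

-- If `A z = 0` then `z = A (H z) + N (A z) = A (H z)`: the certificate shows `ker A ⊆ range A`.
set_option maxRecDepth 10000 in
lemma exists_incMatFin_mul_add_mul_eq_one :
    ∃ H N : Matrix (Fin 13) (Fin 13) (ZMod 3), incMatFin * H + N * incMatFin = 1 := by
  refine ⟨!![0,0,0,0,0,0,0,0,2,2,1,1,1; 0,0,0,0,0,0,1,0,2,1,0,2,1; 0,0,0,0,0,0,0,0,2,2,0,2,1;
    0,0,0,0,0,0,0,0,1,0,0,0,0; 0,0,0,1,0,0,0,0,1,1,0,1,2; 0,0,0,0,0,0,0,0,1,2,0,1,2;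
    0,0,0,0,0,0,0,0,0,0,0,0,0; 0,0,0,0,0,0,0,0,1,1,0,2,2; 0,0,0,0,0,0,0,0,0,0,0,0,0;
    0,0,0,0,0,0,0,0,0,0,0,0,0; 0,0,0,0,0,0,0,0,0,0,0,0,0; 0,0,0,0,0,0,0,0,0,0,0,0,0;
    0,0,0,0,0,0,0,0,0,0,0,0,0],
    !![0,0,1,2,1,2,0,0,0,0,0,0,0; 0,0,1,2,1,0,0,2,0,0,0,0,0; 0,0,2,1,0,0,0,0,0,0,0,0,0;
    0,0,0,0,0,0,0,0,0,0,0,0,0; 0,0,2,2,1,2,0,2,0,0,0,0,0; 0,1,1,1,2,1,0,0,0,0,0,0,0;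
    0,0,0,0,0,0,0,0,0,0,0,0,0; 1,0,1,1,2,0,0,1,0,0,0,0,0; 0,0,0,0,0,0,0,0,0,0,0,0,0;
    0,0,0,0,0,0,0,0,0,0,0,0,0; 0,0,0,0,0,0,0,0,0,0,0,0,0; 0,0,0,0,0,0,0,0,0,0,0,0,0;
    0,0,0,0,0,0,0,0,0,0,0,0,0], ?_⟩
  decide

lemma incid_mk {u w : Fin 3 → ZMod 3} (hu : u ≠ 0) (hw : w ≠ 0) :
    incid (Projectivization.mk _ u hu) (Projectivization.mk _ w hw) ↔ ∑ i, u i * w i = 0 := by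
  obtain ⟨a, ha⟩ := (Projectivization.mk_eq_mk_iff (K := ZMod 3) _ _
    (Projectivization.rep_nonzero _) hu).1 (Projectivization.mk_rep (Projectivization.mk _ u hu))
  obtain ⟨b, hb⟩ := (Projectivization.mk_eq_mk_iff (K := ZMod 3) _ _
    (Projectivization.rep_nonzero _) hw).1 (Projectivization.mk_rep (Projectivization.mk _ w hw))
  have hscale : ∑ i, (a • u) i * (b • w) i = (a * b : ZMod 3) * ∑ i, u i * w i := by
    simp only [Finset.mul_sum, Pi.smul_apply, Units.smul_def, smul_eq_mul]
    exact Finset.sum_congr rfl fun i _ => by ring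
  rw [incid, ← ha, ← hb, hscale]
  simp [a.ne_zero, b.ne_zero]

lemma bijective_mk_pointVec :
    Function.Bijective fun i => Projectivization.mk (ZMod 3) (pointVec i) (pointVec_ne_zero i) := by
  refine (Fintype.bijective_iff_injective_and_card _).2 ⟨fun i j h => ?_, ?_⟩
  · obtain ⟨c, hc⟩ := (Projectivization.mk_eq_mk_iff _ _ _ _ _).1 h
    exact pointVec_eq_of_smul_eq i j ⟨c, c.ne_zero, hc⟩
  · rw [Fintype.card_fin, Fintype.card_eq_nat_card,
      Projectivization.card_of_finrank (ZMod 3) (Fin 3 → ZMod 3) (n := 3) (by simp)]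
    simp [Finset.sum_range_succ]

def pointEquiv : Fin 13 ≃ P2F3 := Equiv.ofBijective _ bijective_mk_pointVec

def incMat : Matrix P2F3 P2F3 (ZMod 3) := Matrix.of chi

lemma incMat_submatrix_pointEquiv : incMat.submatrix pointEquiv pointEquiv = incMatFin := by
  ext i j
  simp [incMat, chi, incMatFin, pointEquiv, incid_mk]

lemma incMat_eq_submatrix : incMat = incMatFin.submatrix pointEquiv.symm pointEquiv.symm := by
  rw [← incMat_submatrix_pointEquiv, Matrix.submatrix_submatrix]
  simp

lemma incMat_mul_self : incMat * incMat = Matrix.of fun _ _ => 1 := by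
  rw [incMat_eq_submatrix, Matrix.submatrix_mul_equiv, incMatFin_mul_self]
  rfl

lemma exists_incMat_mul_add_mul_eq_one :
    ∃ H N : Matrix P2F3 P2F3 (ZMod 3), incMat * H + N * incMat = 1 := by
  obtain ⟨H, N, h⟩ := exists_incMatFin_mul_add_mul_eq_one
  refine ⟨H.submatrix pointEquiv.symm pointEquiv.symm, N.submatrix pointEquiv.symm pointEquiv.symm,
    ?_⟩
  have h' := congrArg (Matrix.submatrix · pointEquiv.symm pointEquiv.symm) h
  simpa [incMat_eq_submatrix, Matrix.submatrix_add, Matrix.submatrix_mul_equiv,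
    Matrix.submatrix_one_equiv] using h'

lemma incid_comm (ℓ p : P2F3) : incid ℓ p ↔ incid p ℓ := by
  simp only [incid, mul_comm]

lemma chi_comm (ℓ p : P2F3) : chi ℓ p = chi p ℓ :=
  if_congr (incid_comm ℓ p) rfl rfl

lemma incMat_transpose : incMatᵀ = incMat := by
  ext ℓ p
  exact chi_comm p ℓ

lemma chi_mul_self (ℓ p : P2F3) : chi ℓ p * chi ℓ p = chi ℓ p := by
  unfold chi; split_ifs <;> simp

-- The diagonal of `A² = J`, since `χ_ℓ` is `0/1`-valued.
lemma sum_chi (ℓ : P2F3) : ∑ p, chi ℓ p = 1 := by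
  have h := congrFun (congrFun incMat_mul_self ℓ) ℓ
  simp only [Matrix.mul_apply, incMat, Matrix.of_apply] at h
  simpa only [← chi_comm ℓ, chi_mul_self] using h

lemma incMat_mulVec_one : incMat *ᵥ 1 = 1 :=
  funext fun ℓ => by simpa [incMat, mulVec, dotProduct] using sum_chi ℓ

lemma dotP_eq_dotProduct (x y : P2F3 → ZMod 3) : dotP x y = x ⬝ᵥ y := rfl

lemma incMat_mulVec_apply (y : P2F3 → ZMod 3) (ℓ : P2F3) : (incMat *ᵥ y) ℓ = dotP (chi ℓ) y :=
  rfl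

lemma mem_CdiffPerp_iff {y : P2F3 → ZMod 3} :
    y ∈ CdiffPerp ↔ ∃ s : ZMod 3, incMat *ᵥ y = s • 1 := by
  constructor
  · intro hy
    refine ⟨dotP (chi (Classical.arbitrary P2F3)) y, funext fun ℓ => ?_⟩
    have h := hy _ (Submodule.subset_span ⟨ℓ, Classical.arbitrary P2F3, rfl⟩)
    rw [dotP_eq_dotProduct, sub_dotProduct, sub_eq_zero] at h
    simpa [incMat_mulVec_apply, dotP_eq_dotProduct] using h
  · rintro ⟨s, hs⟩ x hx
    have hchi : ∀ ℓ, chi ℓ ⬝ᵥ y = s := fun ℓ => by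
      simpa [incMat_mulVec_apply, dotP_eq_dotProduct] using congrFun hs ℓ
    rw [dotP_eq_dotProduct]
    induction hx using Submodule.span_induction with
    | mem v hv =>
      obtain ⟨ℓ, m, rfl⟩ := hv
      rw [sub_dotProduct, hchi, hchi, sub_self]
    | zero => exact zero_dotProduct y
    | add a b _ _ ha hb => rw [add_dotProduct, ha, hb, add_zero]
    | smul r a _ ha => rw [smul_dotProduct, ha, smul_zero]

lemma chi_mem_CdiffPerp (ℓ : P2F3) : chi ℓ ∈ CdiffPerp := by
  refine mem_CdiffPerp_iff.2 ⟨1, funext fun m => ?_⟩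
  have h := congrFun (congrFun incMat_mul_self m) ℓ
  simp only [Matrix.mul_apply, incMat, Matrix.of_apply, ← chi_comm ℓ] at h
  simpa [incMat_mulVec_apply, dotP] using h

lemma exists_vecMul_incMat_eq {c : P2F3 → ZMod 3} (hc : c ∈ CdiffPerp) :
    ∃ t, t ᵥ* incMat = c := by
  obtain ⟨s, hs⟩ := mem_CdiffPerp_iff.1 hc
  obtain ⟨H, N, hHN⟩ := exists_incMat_mul_add_mul_eq_one
  have hker : incMat *ᵥ (c - s • 1) = 0 := by
    rw [mulVec_sub, hs, mulVec_smul, incMat_mulVec_one, sub_self]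
  refine ⟨H *ᵥ (c - s • 1) + s • 1, ?_⟩
  rw [← incMat_transpose, vecMul_transpose]
  calc incMat *ᵥ (H *ᵥ (c - s • 1) + s • 1)
      = (incMat * H + N * incMat) *ᵥ (c - s • 1) + s • 1 := by
        rw [mulVec_add, mulVec_mulVec, add_mulVec, ← mulVec_mulVec _ N, hker, mulVec_zero,
          add_zero, mulVec_smul, incMat_mulVec_one]
    _ = c := by rw [hHN, one_mulVec, sub_add_cancel]

lemma sum_vecMul_incMat (t : P2F3 → ZMod 3) : ∑ p, (t ᵥ* incMat) p = ∑ ℓ, t ℓ := by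
  rw [← dotProduct_one, ← dotProduct_mulVec, incMat_mulVec_one, dotProduct_one]

lemma mem_L16_iff {x : Option P2F3 → ℂ} :
    x ∈ L16 ↔ (∀ i, x i ∈ Eis) ∧ x none - ∑ p, x (some p) ∈ thetaEis ∧
      ∃ c ∈ CdiffPerp, ∀ p, x (some p) - ((c p).val : ℂ) ∈ thetaEis := by
  simp only [L16, Set.mem_ofPred_eq, mem_thetaEis]

lemma lineRoot_none (ℓ : P2F3) : lineRoot ℓ none = 1 := rfl

lemma lineRoot_some (ℓ p : P2F3) : lineRoot ℓ (some p) = ((chi ℓ p).val : ℂ) := by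
  simp only [lineRoot, chi]
  split_ifs <;> simp [ZMod.val_one]

lemma lineRoot_mem_Eis (ℓ : P2F3) (i : Option P2F3) : lineRoot ℓ i ∈ Eis := by
  cases i with
  | none => exact one_mem Eis
  | some p => rw [lineRoot_some]; exact natCast_mem Eis _

lemma pointRoot_mem_L16 (q : P2F3) : pointRoot q ∈ L16 := by
  refine mem_L16_iff.2 ⟨fun i => ?_, ?_, 0, fun x _ => by simp [dotP], fun p => ?_⟩
  · unfold pointRoot
    split_ifs
    exacts [theta_mem_Eis, zero_mem Eis]
  · refine mem_thetaEis.2 ⟨-1, neg_mem (one_mem Eis), ?_⟩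
    simp [pointRoot]
  · refine mem_thetaEis.2 ⟨if p = q then 1 else 0, by split_ifs <;> simp, ?_⟩
    simp [pointRoot]

lemma lineRoot_mem_L16 (ℓ : P2F3) : lineRoot ℓ ∈ L16 := by
  refine mem_L16_iff.2 ⟨lineRoot_mem_Eis ℓ, ?_, chi ℓ, chi_mem_CdiffPerp ℓ, fun p => ?_⟩
  · have hcard : ((∑ p, (chi ℓ p).val : ℕ) : ZMod 3) = (1 : ℕ) := by
      simpa using sum_chi ℓ
    simpa [lineRoot_none, lineRoot_some] using natCast_sub_natCast_mem_thetaEis hcard.symm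
  · simp [lineRoot_some]

lemma exists_lineRoot_coeffs_modTheta {x : Option P2F3 → ℂ} (hx : x ∈ L16) :
    ∃ b : P2F3 → ℂ, (∀ ℓ, b ℓ ∈ Eis) ∧ x none - ∑ ℓ, b ℓ ∈ thetaEis ∧
      ∀ p, x (some p) - ∑ ℓ, b ℓ * lineRoot ℓ (some p) ∈ thetaEis := by
  obtain ⟨-, hnone, c, hc, hsome⟩ := mem_L16_iff.1 hx
  obtain ⟨t, rfl⟩ := exists_vecMul_incMat_eq hc
  refine ⟨fun ℓ => (t ℓ).val, fun ℓ => natCast_mem Eis _, ?_, fun p => ?_⟩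
  · have hsum := natCast_sub_natCast_mem_thetaEis (m := ∑ p, ((t ᵥ* incMat) p).val)
      (n := ∑ ℓ, (t ℓ).val) (by simpa using sum_vecMul_incMat t)
    push_cast at hsum
    convert add_mem (add_mem hnone (sum_mem fun p _ => hsome p)) hsum using 1
    rw [Finset.sum_sub_distrib]
    ring
  · have hlift := natCast_sub_natCast_mem_thetaEis (m := ∑ ℓ, (t ℓ).val * (chi ℓ p).val)
      (n := ((t ᵥ* incMat) p).val) (by simp [vecMul, dotProduct, incMat])
    push_cast at hlift
    convert sub_mem (hsome p) hlift using 1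
    simp only [lineRoot_some]
    ring

lemma exists_lineRoot_coeffs {x : Option P2F3 → ℂ} (hx : x ∈ L16) :
    ∃ b : P2F3 → ℂ, (∀ ℓ, b ℓ ∈ Eis) ∧ ∑ ℓ, b ℓ = x none ∧
      ∀ p, x (some p) - ∑ ℓ, b ℓ * lineRoot ℓ (some p) ∈ thetaEis := by
  obtain ⟨b, hbE, hnone, hsome⟩ := exists_lineRoot_coeffs_modTheta hx
  obtain ⟨d, hd, hxd⟩ := mem_thetaEis.1 hnone
  set ℓ₀ := Classical.arbitrary P2F3
  have hθd : θ * d ∈ Eis := mul_mem theta_mem_Eis hd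
  refine ⟨b + Pi.single ℓ₀ (θ * d), fun ℓ => ?_, ?_, fun p => ?_⟩
  · by_cases h : ℓ = ℓ₀
    · subst h; simpa using add_mem (hbE _) hθd
    · simpa [h] using hbE ℓ
  · simp only [Pi.add_apply, Finset.sum_add_distrib, Finset.sum_pi_single', Finset.mem_univ,
      if_true]
    linear_combination -hxd
  · have hθ : θ * d * lineRoot ℓ₀ (some p) ∈ thetaEis :=
      mem_thetaEis.2 ⟨d * lineRoot ℓ₀ (some p), mul_mem hd (lineRoot_mem_Eis _ _), by ring⟩
    convert sub_mem (hsome p) hθ using 1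
    simp only [Pi.add_apply, Pi.single_apply, add_mul, ite_mul, zero_mul,
      Finset.sum_add_distrib, Finset.sum_ite_eq', Finset.mem_univ, if_true]
    ring

lemma eq_sum_pointRoot_add_sum_lineRoot {x : Option P2F3 → ℂ} (a b : P2F3 → ℂ)
    (hnone : ∑ ℓ, b ℓ = x none)
    (hsome : ∀ p, x (some p) - ∑ ℓ, b ℓ * lineRoot ℓ (some p) = θ * a p) :
    x = (∑ p, a p • pointRoot p) + ∑ ℓ, b ℓ • lineRoot ℓ := by
  funext i
  cases i with
  | none => simp [pointRoot, lineRoot_none, hnone]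
  | some p =>
    simp only [Pi.add_apply, Finset.sum_apply, Pi.smul_apply, smul_eq_mul, pointRoot,
      Option.some.injEq, mul_ite, mul_zero, Finset.sum_ite_eq, Finset.mem_univ, if_true]
    linear_combination hsome p

/-- `L` is spanned as an `Eis`-module by the 13 point roots and the 13 line roots. -/
theorem stmt16 :
    (∀ q : P2F3, pointRoot q ∈ L16) ∧
    (∀ ℓ : P2F3, lineRoot ℓ ∈ L16) ∧
    ∀ x ∈ L16, ∃ a b : P2F3 → ℂ,
      (∀ p, a p ∈ Eis) ∧ (∀ ℓ, b ℓ ∈ Eis) ∧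
      x = (∑ p : P2F3, a p • pointRoot p) + ∑ ℓ : P2F3, b ℓ • lineRoot ℓ := by
  refine ⟨pointRoot_mem_L16, lineRoot_mem_L16, fun x hx => ?_⟩
  obtain ⟨b, hbE, hnone, hsome⟩ := exists_lineRoot_coeffs hx
  choose a haE ha using fun p => mem_thetaEis.1 (hsome p)
  exact ⟨a, b, haE, hbE, eq_sum_pointRoot_add_sum_lineRoot a b hnone ha⟩
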